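/- arXiv:1210.1295 — 3 statements merged into one kernel-verified Lean document; each statement's English description precedes it below -/
import Mathlib

section
/- In the Fomin–Kirillov algebra E_n, the Dunkl elements commute pairwise: for all i, j in {1,...,n}, θ_i θ_j = θ_j θ_i. -/
/-- The Dunkl element `θ_i = -∑_{j<i} x_{ji} + ∑_{k>i} x_{ik}` built from the
generators `x` of the Fomin–Kirillov algebra. -/
def dunkl {n : ℕ} {A : Type*} [Ring A] (x : Fin n → Fin n → A) (i : Fin n) : A :=
  -(∑ j ∈ Finset.univ.filter (fun j => j < i), x j i) +
    ∑ k ∈ Finset.univ.filter (fun k => i < k), x i k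

section aux
variable {n : ℕ} {A : Type*} [Ring A]

def yy (x : Fin n → Fin n → A) (i j : Fin n) : A :=
  if i < j then x i j else if j < i then -x j i else 0

lemma yy_lt (x : Fin n → Fin n → A) {i j : Fin n} (h : i < j) : yy x i j = x i j := by
  simp [yy, h]

lemma yy_gt (x : Fin n → Fin n → A) {i j : Fin n} (h : j < i) : yy x i j = -x j i := by
  simp [yy, h, asymm h]

lemma yy_self (x : Fin n → Fin n → A) (i : Fin n) : yy x i i = 0 := by
  simp [yy]

lemma yy_anti (x : Fin n → Fin n → A) (i j : Fin n) : yy x j i = -yy x i j := by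
  rcases lt_trichotomy i j with h|h|h
  · rw [yy_lt x h, yy_gt x h]
  · subst h; simp [yy_self]
  · rw [yy_gt x h, yy_lt x h, neg_neg]

lemma dunkl_eq_sum (x : Fin n → Fin n → A) (i : Fin n) :
    dunkl x i = ∑ k, yy x i k := by
  have h : ∀ k : Fin n, yy x i k =
      (if k < i then -x k i else 0) + (if i < k then x i k else 0) := by
    intro k
    rcases lt_trichotomy i k with h|h|h
    · simp [yy_lt x h, asymm h, h]
    · subst h; simp [yy_self]
    · simp [yy_gt x h, asymm h, h]
  simp_rw [h]
  rw [Finset.sum_add_distrib, ← Finset.sum_filter, ← Finset.sum_filter, dunkl,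
    ← Finset.sum_neg_distrib]

lemma yy_comm (x : Fin n → Fin n → A)
    (hcomm : ∀ i j k l : Fin n, i < j → k < l → i ≠ k → i ≠ l → j ≠ k → j ≠ l →
      x i j * x k l = x k l * x i j)
    (a b k l : Fin n) (hak : a ≠ k) (hal : a ≠ l) (hbk : b ≠ k) (hbl : b ≠ l) :
    yy x a b * yy x k l = yy x k l * yy x a b := by
  rcases lt_trichotomy a b with h1|h1|h1
  · rcases lt_trichotomy k l with h2|h2|h2
    · rw [yy_lt x h1, yy_lt x h2, hcomm a b k l h1 h2 hak hal hbk hbl]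
    · subst h2; simp [yy_self]
    · rw [yy_lt x h1, yy_gt x h2, mul_neg, neg_mul,
        hcomm a b l k h1 h2 hal hak hbl hbk]
  · subst h1; simp [yy_self]
  · rcases lt_trichotomy k l with h2|h2|h2
    · rw [yy_gt x h1, yy_lt x h2, mul_neg, neg_mul,
        hcomm b a k l h1 h2 hbk hbl hak hal]
    · subst h2; simp [yy_self]
    · rw [yy_gt x h1, yy_gt x h2, mul_neg, neg_mul, neg_mul, mul_neg,
        hcomm b a l k h1 h2 hbl hbk hal hak]

lemma yy_triple (x : Fin n → Fin n → A)
    (hrel1 : ∀ i j k : Fin n, i < j → j < k →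
      x i j * x j k = x i k * x i j + x j k * x i k)
    (hrel2 : ∀ i j k : Fin n, i < j → j < k →
      x j k * x i j = x i j * x i k + x i k * x j k)
    (i j k : Fin n) (hij : i ≠ j) (hik : i ≠ k) (hjk : j ≠ k) :
    (yy x i j * yy x j k - yy x j k * yy x i j) +
      ((yy x i k * yy x j i - yy x j i * yy x i k) +
       (yy x i k * yy x j k - yy x j k * yy x i k)) = 0 := by
  rw [yy_anti x i j]
  rcases lt_trichotomy i j with h1|h1|h1
  · rcases lt_trichotomy i k with h2|h2|h2
    · rcases lt_trichotomy j k with h3|h3|h3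
      · -- i < j < k
        rw [yy_lt x h1, yy_lt x h2, yy_lt x h3]
        simp only [neg_mul, mul_neg, neg_neg]
        rw [hrel1 i j k h1 h3, hrel2 i j k h1 h3]
        noncomm_ring
      · exact absurd h3 hjk
      · -- i < k < j
        rw [yy_lt x h1, yy_lt x h2, yy_gt x h3]
        simp only [neg_mul, mul_neg, neg_neg]
        rw [hrel1 i k j h2 h3, hrel2 i k j h2 h3]
        noncomm_ring
    · exact absurd h2 hik
    · -- k < i < j
      have h3 : k < j := h2.trans h1
      rw [yy_lt x h1, yy_gt x h2, yy_gt x h3]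
      simp only [neg_mul, mul_neg, neg_neg]
      rw [hrel1 k i j h2 h1, hrel2 k i j h2 h1]
      noncomm_ring
  · exact absurd h1 hij
  · rcases lt_trichotomy j k with h3|h3|h3
    · rcases lt_trichotomy i k with h2|h2|h2
      · -- j < i < k
        rw [yy_gt x h1, yy_lt x h2, yy_lt x h3]
        simp only [neg_mul, mul_neg, neg_neg]
        rw [hrel1 j i k h1 h2, hrel2 j i k h1 h2]
        noncomm_ring
      · exact absurd h2 hik
      · -- j < k < i
        rw [yy_gt x h1, yy_gt x h2, yy_lt x h3]
        simp only [neg_mul, mul_neg, neg_neg]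
        rw [hrel1 j k i h3 h2, hrel2 j k i h3 h2]
        noncomm_ring
    · exact absurd h3 hjk
    · -- k < j < i
      have h2 : k < i := h3.trans h1
      rw [yy_gt x h1, yy_gt x h2, yy_gt x h3]
      simp only [neg_mul, mul_neg, neg_neg]
      rw [hrel1 k j i h3 h1, hrel2 k j i h3 h1]
      noncomm_ring
end aux

/-- In the Fomin–Kirillov algebra `E_n` (i.e. in any ℂ-algebra with generators
`x i j` (for `i < j`) satisfying the Fomin–Kirillov relations), the Dunkl
elements commute pairwise. -/
theorem dunkl_commute (n : ℕ) (A : Type*) [Ring A] [Algebra ℂ A]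
    (x : Fin n → Fin n → A)
    (hsq : ∀ i j : Fin n, i < j → x i j * x i j = 0)
    (hrel1 : ∀ i j k : Fin n, i < j → j < k →
      x i j * x j k = x i k * x i j + x j k * x i k)
    (hrel2 : ∀ i j k : Fin n, i < j → j < k →
      x j k * x i j = x i j * x i k + x i k * x j k)
    (hcomm : ∀ i j k l : Fin n, i < j → k < l → i ≠ k → i ≠ l → j ≠ k → j ≠ l →
      x i j * x k l = x k l * x i j) :
    ∀ i j : Fin n, dunkl x i * dunkl x j = dunkl x j * dunkl x i := by
  intro i j
  rcases eq_or_ne i j with rfl|hij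
  · rfl
  set c : Fin n → Fin n → A :=
    fun k l => yy x i k * yy x j l - yy x j l * yy x i k with hc
  -- pointwise decomposition
  have hczero : ∀ k l : Fin n, k ≠ j → l ≠ i → l ≠ k → c k l = 0 := by
    intro k l hkj hli hlk
    rcases eq_or_ne k i with rfl|hki
    · simp [hc, yy_self]
    rcases eq_or_ne l j with rfl|hlj
    · simp [hc, yy_self]
    have := yy_comm x hcomm i k j l hij hli.symm hkj hlk.symm
    simp [hc, this]
  have hdiag : ∀ k : Fin n, c j k + (c k i + c k k) = 0 := by
    intro k
    by_cases hki : k = i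
    · subst hki
      simp only [hc, yy_self, yy_anti x k j, mul_zero, zero_mul]
      noncomm_ring
    by_cases hkj : k = j
    · subst hkj
      simp only [hc, yy_self, yy_anti x i k, mul_zero, zero_mul]
      noncomm_ring
    · have h := yy_triple x hrel1 hrel2 i j k hij (Ne.symm hki) (Ne.symm hkj)
      simpa only [hc] using h
  -- expand the products
  rw [dunkl_eq_sum, dunkl_eq_sum, Finset.sum_mul_sum, Finset.sum_mul_sum,
    ← sub_eq_zero]
  rw [Finset.sum_comm (f := fun a b => yy x j a * yy x i b)]
  rw [← Finset.sum_sub_distrib]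
  simp_rw [← Finset.sum_sub_distrib]
  have e1 : c j i = 0 := by
    simp only [hc, yy_anti x i j]
    noncomm_ring
  have e2 : c j j = 0 := by simp [hc, yy_self]
  have e3 : c i i = 0 := by simp [hc, yy_self]
  have key : ∀ k l : Fin n,
      yy x i k * yy x j l - yy x j l * yy x i k =
      (if k = j then c k l else 0) +
        ((if l = i then c k l else 0) + (if l = k then c k l else 0)) := by
    intro k l
    show c k l = _
    by_cases hkj : k = j
    · by_cases hli : l = i
      · have h4 : l ≠ k := by rw [hli, hkj]; exact hij
        rw [if_pos hkj, if_pos hli, if_neg h4, hkj, hli, e1, add_zero, add_zero]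
      · by_cases hlk : l = k
        · rw [if_pos hkj, if_neg hli, if_pos hlk, hlk, hkj, e2]
          simp
        · rw [if_pos hkj, if_neg hli, if_neg hlk]
          simp
    · by_cases hli : l = i
      · by_cases hlk : l = k
        · have hki : k = i := by rw [← hlk, hli]
          rw [if_neg hkj, if_pos hli, if_pos hlk, hli, hki, e3]
          simp
        · rw [if_neg hkj, if_pos hli, if_neg hlk]
          simp
      · by_cases hlk : l = k
        · rw [if_neg hkj, if_pos hlk, if_neg hli]
          simp
        · rw [hczero k l hkj hli hlk, if_neg hkj, if_neg hli, if_neg hlk]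
          simp
  simp_rw [key]
  simp_rw [Finset.sum_add_distrib]
  have pull : ∀ k : Fin n, (∑ l : Fin n, if k = j then c k l else 0) =
      if k = j then ∑ l : Fin n, c k l else 0 := by
    intro k
    by_cases h : k = j <;> simp [h]
  simp_rw [pull, Finset.sum_ite_eq', Finset.mem_univ, if_true]
  rw [← Finset.sum_add_distrib, ← Finset.sum_add_distrib]
  simp only [hdiag, Finset.sum_const_zero]
end

section
/- With e_m = 0 for m > a and h_m = 0 for m > b in a commutative ring (with the standard relation between e and h), the product e_a · h_b satisfies e_a h_b = s_{(b+1,1^{a−1})} + s_{(b,1^a)} = 0, where s_λ is defined by the Jacobi–Trudi determinant. -/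
/-- Extension of `h : ℕ → R` to integer indices, with `h m = 0` for `m < 0`. -/
def Hz {R : Type*} [Zero R] (h : ℕ → R) : ℤ → R :=
  fun m => if 0 ≤ m then h m.toNat else 0

/-- The Jacobi–Trudi determinant `s_λ = det [h_{λ_i - i + j}]_{i,j=1}^ℓ`. -/
def jt {R : Type*} [CommRing R] (h : ℕ → R) {ℓ : ℕ} (lam : Fin ℓ → ℕ) : R :=
  Matrix.det (Matrix.of fun i j : Fin ℓ =>
    Hz h ((lam i : ℤ) - (i.val : ℤ) + (j.val : ℤ)))

lemma Hz_nonneg {R : Type*} [Zero R] (h : ℕ → R) (m : ℤ) (hm : 0 ≤ m) :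
    Hz h m = h m.toNat := if_pos hm

lemma Hz_neg {R : Type*} [Zero R] (h : ℕ → R) (m : ℤ) (hm : m < 0) :
    Hz h m = 0 := if_neg (not_le.mpr hm)

lemma neg_one_pow_cancel {R : Type*} [CommRing R] (n : ℕ) (x : R)
    (hx : (-1 : R) ^ n * x = 0) : x = 0 := by
  have : ((-1 : R) ^ n) * ((-1 : R) ^ n * x) = x := by
    rw [← mul_assoc, ← pow_add, Even.neg_one_pow ⟨n, by ring⟩, one_mul]
  rw [← this, hx, mul_zero]

/-- With `e_m = 0` for `m > a` and `h_m = 0` for `m > b` (and the standard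
relation between `e` and `h`), the product `e_a · h_b` satisfies
`e_a h_b = s_{(b+1,1^{a-1})} + s_{(b,1^a)} = 0`, where `s_λ` is given by the
Jacobi–Trudi determinant. -/
theorem ea_hb_eq_hooks_eq_zero (R : Type*) [CommRing R] (a b : ℕ)
    (ha1 : 1 ≤ a) (hb1 : 1 ≤ b)
    (e h : ℕ → R) (he0 : e 0 = 1) (hh0 : h 0 = 1)
    (hrel : ∀ m : ℕ, 1 ≤ m →
      ∑ i ∈ Finset.range (m + 1), (-1 : R) ^ i * e i * h (m - i) = 0)
    (ha : ∀ m, a < m → e m = 0) (hb : ∀ m, b < m → h m = 0) :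
    e a * h b = jt h (fun i : Fin a => if i.val = 0 then b + 1 else 1) +
        jt h (fun i : Fin (a + 1) => if i.val = 0 then b else 1) ∧
      e a * h b = 0 := by
  -- e a * h b = 0 from the relation at m = a + b
  have key0 : e a * h b = 0 := by
    have H := hrel (a + b) (le_trans ha1 (Nat.le_add_right a b))
    rw [Finset.sum_eq_single a (fun i hi hne => by
        rcases lt_or_gt_of_ne hne with hlt | hgt
        · rw [hb (a + b - i) (by omega), mul_zero]
        · rw [ha i hgt, mul_zero, zero_mul])
      (fun habs => absurd (Finset.mem_range.mpr (by omega)) habs)] at H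
    have hab : a + b - a = b := by omega
    rw [hab] at H
    exact neg_one_pow_cancel a _ (by rw [← mul_assoc]; exact H)
  -- first determinant: first row is identically zero
  have det1 : jt h (fun i : Fin a => if i.val = 0 then b + 1 else 1) = 0 := by
    unfold jt
    apply Matrix.det_eq_zero_of_row_eq_zero ⟨0, ha1⟩
    intro j
    show Hz h (((if ((⟨0, ha1⟩ : Fin a) : ℕ) = 0 then b + 1 else 1 : ℕ) : ℤ)
        - (((⟨0, ha1⟩ : Fin a) : ℕ) : ℤ) + ((j : ℕ) : ℤ)) = 0
    rw [show ((⟨0, ha1⟩ : Fin a) : ℕ) = 0 from rfl, if_pos rfl]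
    rw [Hz_nonneg h _ (by push_cast; omega)]
    apply hb
    omega
  -- second determinant: kernel vector built from the e's
  have det2 : jt h (fun i : Fin (a + 1) => if i.val = 0 then b else 1) = 0 := by
    set lam : Fin (a+1) → ℕ := fun i => if i.val = 0 then b else 1 with hlam
    set M : Matrix (Fin (a+1)) (Fin (a+1)) R :=
      Matrix.of (fun i j : Fin (a+1) => Hz h ((lam i : ℤ) - (i.val : ℤ) + (j.val : ℤ))) with hM
    set v : Fin (a+1) → R := fun j => (-1 : R) ^ (j : ℕ) * e (a - (j : ℕ)) with hv
    have hker : M.mulVec v = 0 := by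
      funext i
      show (∑ j : Fin (a+1), M i j * v j) = (0 : R)
      by_cases hi0 : (i : ℕ) = 0
      · -- row 0 : only j = 0 survives, giving h b * e a = 0
        have hrow : ∀ j : Fin (a+1), M i j = Hz h ((b : ℤ) + ((j : ℕ) : ℤ)) := by
          intro j
          show Hz h ((lam i : ℤ) - ((i : ℕ) : ℤ) + ((j : ℕ) : ℤ)) = _
          rw [show lam i = b from if_pos hi0, hi0]
          norm_num
        rw [Finset.sum_eq_single (⟨0, Nat.succ_pos a⟩ : Fin (a+1))
          (fun j _ hne => by
            have hjne : (j : ℕ) ≠ 0 := fun h0 => hne (Fin.ext h0)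
            rw [hrow j, Hz_nonneg h _ (by positivity),
              hb _ (by omega : b < ((b : ℤ) + ((j : ℕ) : ℤ)).toNat), zero_mul])
          (fun habs => absurd (Finset.mem_univ _) habs)]
        rw [hrow _, Hz_nonneg h _ (by positivity)]
        show h (((b : ℤ) + ((0:ℕ) : ℤ)).toNat) * ((-1:R)^(0:ℕ) * e (a - 0)) = 0
        rw [show ((b : ℤ) + ((0:ℕ) : ℤ)).toNat = b by omega]
        simp only [pow_zero, one_mul, Nat.sub_zero]
        rw [mul_comm]; exact key0
      · -- rows i ≥ 1 : use the relation at m = a + 1 - i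
        have ht1 : 1 ≤ (i : ℕ) := by omega
        have hta : (i : ℕ) ≤ a := by have := i.isLt; omega
        set m : ℕ := a + 1 - (i : ℕ) with hm
        have hm1 : 1 ≤ m := by omega
        have hma : m ≤ a := by omega
        have hterm : ∀ j : Fin (a+1), M i j * v j =
            (-1:R)^a * ((-1:R)^(a - (j:ℕ)) * e (a - (j:ℕ)) *
              Hz h ((m : ℤ) - ((a - (j:ℕ) : ℕ) : ℤ))) := by
          intro j
          have hMij : M i j = Hz h ((m : ℤ) - ((a - (j:ℕ) : ℕ) : ℤ)) := by
            show Hz h ((lam i : ℤ) - ((i : ℕ) : ℤ) + ((j : ℕ) : ℤ)) = _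
            rw [show lam i = 1 from if_neg hi0]
            congr 1
            have hj := j.isLt
            push_cast [hm]
            omega
          rw [hMij]
          simp only [hv]
          have hsign : (-1:R)^((j:ℕ)) = (-1:R)^a * (-1:R)^(a - (j:ℕ)) := by
            rw [← pow_add]
            have hj : (j : ℕ) ≤ a := by have := j.isLt; omega
            rw [show a + (a - (j:ℕ)) = (j:ℕ) + 2 * (a - (j:ℕ)) by omega,
              pow_add, pow_mul]
            norm_num
          rw [hsign]; ring
        rw [Finset.sum_congr rfl (fun j _ => hterm j), ← Finset.mul_sum]
        have hre : ∑ j : Fin (a+1), ((-1:R)^(a - (j:ℕ)) * e (a - (j:ℕ)) *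
              Hz h ((m : ℤ) - ((a - (j:ℕ) : ℕ) : ℤ)))
            = ∑ k ∈ Finset.range (a+1), ((-1:R)^k * e k * Hz h ((m : ℤ) - (k : ℤ))) := by
          rw [Fin.sum_univ_eq_sum_range (fun j => ((-1:R)^(a - j) * e (a - j) *
              Hz h ((m : ℤ) - ((a - j : ℕ) : ℤ))))]
          rw [← Finset.sum_range_reflect]
          apply Finset.sum_congr rfl
          intro k hk
          have hk' := Finset.mem_range.mp hk
          rw [show a + 1 - 1 - k = a - k from by omega,
            show a - (a - k) = k from by omega]
        rw [hre]
        have hvanish : ∀ k ∈ Finset.range (a+1), k ∉ Finset.range (m+1) →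
            (-1:R)^k * e k * Hz h ((m:ℤ) - (k:ℤ)) = 0 := by
          intro k _ hk
          have hmk : m < k := by
            by_contra hc
            exact hk (Finset.mem_range.mpr (by omega))
          rw [Hz_neg h _ (by omega), mul_zero]
        rw [← Finset.sum_subset (Finset.range_subset_range.mpr (by omega)) hvanish]
        have hcg : ∀ k ∈ Finset.range (m+1), (-1:R)^k * e k * Hz h ((m:ℤ)-(k:ℤ))
            = (-1:R)^k * e k * h (m-k) := by
          intro k hk
          have hkm : k ≤ m := by have := Finset.mem_range.mp hk; omega
          rw [Hz_nonneg h _ (by omega),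
            show ((m:ℤ)-(k:ℤ)).toNat = m - k from by omega]
        rw [Finset.sum_congr rfl hcg, hrel m hm1, mul_zero]
    have hadj := congrArg (fun w => (Matrix.adjugate M).mulVec w) hker
    simp only [Matrix.mulVec_mulVec, Matrix.adjugate_mul, Matrix.mulVec_zero] at hadj
    have hlast := congrFun hadj (Fin.last a)
    rw [Matrix.smul_mulVec, Matrix.one_mulVec] at hlast
    simp only [Pi.smul_apply, smul_eq_mul, Pi.zero_apply, hv, Fin.val_last,
      Nat.sub_self, he0, mul_one] at hlast
    show M.det = 0
    exact neg_one_pow_cancel a _ (by rw [mul_comm] at hlast; exact hlast)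
  exact ⟨by rw [det1, det2, add_zero, key0], key0⟩
end

section
/- For integers A ≥ 0 and B ≥ 2, the inequality (max(A, B+1) + 1) · C(A+B, A) ≥ C(A+B+2, A+1) holds; equivalently, max(A,B+1) + 1 ≥ (A+B+1)(A+B+2)/((A+1)(B+1)). -/
lemma choose_key (A B : ℕ) :
    ((A + 1) * (B + 1)) * (A + B + 2).choose (A + 1)
      = ((A + B + 1) * (A + B + 2)) * (A + B).choose A := by
  have h1 : (A + B + 1) * (A + B).choose A = (A + B + 1).choose (A + 1) * (A + 1) := by
    simpa using Nat.add_one_mul_choose_eq (A + B) A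
  have hsym1 : (A + B + 1).choose (A + 1) = (A + B + 1).choose B := by
    have := Nat.choose_symm (n := A + B + 1) (k := A + 1) (by omega)
    simpa [show A + B + 1 - (A + 1) = B by omega] using this.symm
  have h2 : (A + B + 2) * (A + B + 1).choose B = (A + B + 2).choose (B + 1) * (B + 1) := by
    simpa [show A + B + 1 + 1 = A + B + 2 by ring] using Nat.add_one_mul_choose_eq (A + B + 1) B
  have hsym2 : (A + B + 2).choose (B + 1) = (A + B + 2).choose (A + 1) := by
    have := Nat.choose_symm (n := A + B + 2) (k := A + 1) (by omega)
    simpa [show A + B + 2 - (A + 1) = B + 1 by omega] using this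
  calc ((A + 1) * (B + 1)) * (A + B + 2).choose (A + 1)
      = (A + 1) * ((A + B + 2).choose (B + 1) * (B + 1)) := by rw [hsym2]; ring
    _ = (A + 1) * ((A + B + 2) * (A + B + 1).choose B) := by rw [h2]
    _ = (A + B + 2) * ((A + B + 1).choose (A + 1) * (A + 1)) := by rw [hsym1]; ring
    _ = (A + B + 2) * ((A + B + 1) * (A + B).choose A) := by rw [h1]
    _ = ((A + B + 1) * (A + B + 2)) * (A + B).choose A := by ring

/-- For integers `A ≥ 0` and `B ≥ 2`:
`(max(A,B+1)+1)·C(A+B,A) ≥ C(A+B+2,A+1)`; equivalently (in division-free form),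
`(max(A,B+1)+1)·(A+1)·(B+1) ≥ (A+B+1)(A+B+2)`. -/
theorem fourth_case_inequality (A B : ℕ) (hB : 2 ≤ B) :
    (max A (B + 1) + 1) * (A + B).choose A ≥ (A + B + 2).choose (A + 1) ∧
      (max A (B + 1) + 1) * ((A + 1) * (B + 1)) ≥ (A + B + 1) * (A + B + 2) := by
  have h2 : (max A (B + 1) + 1) * ((A + 1) * (B + 1)) ≥ (A + B + 1) * (A + B + 2) := by
    rcases le_total A (B + 1) with h | h
    · rw [max_eq_right h]
      zify at h hB ⊢
      nlinarith [mul_nonneg (show (0:ℤ) ≤ A by positivity)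
        (show (0:ℤ) ≤ B ^ 2 + B - 1 - A by nlinarith)]
    · rw [max_eq_left h]
      zify at h hB ⊢
      nlinarith [mul_nonneg (show (0:ℤ) ≤ A - B - 1 by linarith)
        (show (0:ℤ) ≤ A + B + 1 by positivity),
        mul_nonneg (show (0:ℤ) ≤ A by positivity)
        (show (0:ℤ) ≤ A * B - 1 by nlinarith)]
  refine ⟨?_, h2⟩
  have hpos : 0 < (A + 1) * (B + 1) := by positivity
  refine Nat.le_of_mul_le_mul_left ?_ hpos
  rw [choose_key]
  calc (A + B + 1) * (A + B + 2) * (A + B).choose A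
      ≤ (max A (B + 1) + 1) * ((A + 1) * (B + 1)) * (A + B).choose A :=
        Nat.mul_le_mul_right _ h2
    _ = (A + 1) * (B + 1) * ((max A (B + 1) + 1) * (A + B).choose A) := by ring
end
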